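/- arXiv:2411.02033 — 2 statements merged into one kernel-verified Lean document; each statement's English description precedes it below -/
import Mathlib

section
/- For every fixed t > 0 and d₀ > 0, the function b ↦ (1 + b d₀ t)^{-1/b} is monotone nondecreasing on (0,∞): if 0 < b₁ ≤ b₂ then (1 + b₁ d₀ t)^{-1/b₁} ≤ (1 + b₂ d₀ t)^{-1/b₂}. -/
/-- For fixed `t > 0` and `d₀ > 0`, the map `b ↦ (1 + b d₀ t)^(-1/b)` is monotone
nondecreasing on `(0, ∞)`. -/
theorem arps_monotone_in_b (d₀ t : ℝ) (hd₀ : 0 < d₀) (ht : 0 < t) :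
    ∀ b₁ b₂ : ℝ, 0 < b₁ → b₁ ≤ b₂ →
      (1 + b₁ * d₀ * t) ^ (-(1 / b₁) : ℝ) ≤ (1 + b₂ * d₀ * t) ^ (-(1 / b₂) : ℝ) := by
  intro b₁ b₂ hb₁ hle
  have hb₂ : 0 < b₂ := lt_of_lt_of_le hb₁ hle
  have hx : 0 < d₀ * t := mul_pos hd₀ ht
  have h1 : (0:ℝ) < 1 + b₁ * d₀ * t := by nlinarith
  have h2 : (0:ℝ) < 1 + b₂ * d₀ * t := by nlinarith
  -- key: (1 + b₂ d₀ t)^(1/b₂) ≤ (1 + b₁ d₀ t)^(1/b₁)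
  have key : (1 + b₂ * d₀ * t) ^ ((1:ℝ)/b₂) ≤ (1 + b₁ * d₀ * t) ^ ((1:ℝ)/b₁) := by
    have hbern : (1 + b₂ * d₀ * t) ^ (b₁/b₂ : ℝ) ≤ 1 + b₁ * d₀ * t := by
      have := rpow_one_add_le_one_add_mul_self (s := b₂ * d₀ * t)
        (by nlinarith) (p := b₁/b₂) (by positivity)
        ((div_le_one hb₂).2 hle)
      calc (1 + b₂ * d₀ * t) ^ (b₁/b₂ : ℝ)
          ≤ 1 + (b₁/b₂) * (b₂ * d₀ * t) := by
            rw [mul_assoc] at this ⊢; exact this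
        _ = 1 + b₁ * d₀ * t := by field_simp
    have hexp : (1 + b₂ * d₀ * t) ^ ((1:ℝ)/b₂)
        = ((1 + b₂ * d₀ * t) ^ (b₁/b₂ : ℝ)) ^ ((1:ℝ)/b₁) := by
      rw [← Real.rpow_mul h2.le]
      congr 1
      field_simp
    rw [hexp]
    exact Real.rpow_le_rpow (Real.rpow_nonneg h2.le _) hbern (by positivity)
  have e1 : (1 + b₁ * d₀ * t) ^ (-(1 / b₁) : ℝ)
      = ((1 + b₁ * d₀ * t) ^ ((1:ℝ)/b₁))⁻¹ := by
    rw [Real.rpow_neg h1.le]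
  have e2 : (1 + b₂ * d₀ * t) ^ (-(1 / b₂) : ℝ)
      = ((1 + b₂ * d₀ * t) ^ ((1:ℝ)/b₂))⁻¹ := by
    rw [Real.rpow_neg h2.le]
  rw [e1, e2]
  exact inv_anti₀ (Real.rpow_pos_of_pos h2 _) key
end

section
/- Let (B_t)_{t ≥ 0} be a stochastic process with almost surely continuous sample paths and B_0 = 0 almost surely. For b > 0 define the boundary c₂(t; b) = σ t / 2 + (1/σ) ln(x/q₀) + (1/(b σ)) ln(1 + b d₀ t) and the hitting time T(b)(ω) = inf { t ≥ 0 : B_t(ω) = c₂(t; b) } (values in [0,∞], inf ∅ = +∞). If 0 < b₁ ≤ b₂ then T(b₁) is stochastically smaller than T(b₂): P[T(b₁) > t] ≤ P[T(b₂) > t] for all t. -/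
/-!
Larger `b` lowers the boundary: `b ↦ log (1 + b u) / b` is antitone, being the slope of the
concave function `log` between `1` and `1 + b u` (rescaled by `u`). Since every boundary starts
at `(1/σ) ln(x/q₀) < 0 = B₀`, a continuous path that meets the lower boundary `c₂(·; b₂)` at time
`s` lies weakly below the upper boundary `c₂(·; b₁)` there, and so, by the intermediate value
theorem, has already met it on `[0, s]`. Hence `T(b₁) ≤ T(b₂)` pathwise almost surely.
-/

open MeasureTheory Set
open scoped ENNReal

lemma Real.log_one_add_mul_div_le {b₁ b₂ u : ℝ} (hb₁ : 0 < b₁) (h12 : b₁ ≤ b₂) (hu : 0 ≤ u) :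
    Real.log (1 + b₂ * u) / b₂ ≤ Real.log (1 + b₁ * u) / b₁ := by
  rcases hu.eq_or_lt with rfl | hu
  · simp
  have hb₂ : 0 < b₂ := hb₁.trans_le h12
  have hmem : ∀ {b : ℝ}, 0 < b → 1 + b * u ∈ {y ∈ Ioi (0 : ℝ) | 1 < y} := fun hb =>
    ⟨by simp only [mem_Ioi]; positivity, by simp only [lt_add_iff_pos_right]; positivity⟩
  have h := strictConcaveOn_log_Ioi.concaveOn.antitoneOn_slope_gt (by norm_num : (1 : ℝ) ∈ Ioi 0)
    (hmem hb₁) (hmem hb₂) (by gcongr)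
  simp only [slope_def_field, Real.log_one, sub_zero, add_sub_cancel_left, ← div_div] at h
  exact (div_le_div_iff_of_pos_right hu).1 h

noncomputable def boundaryHittingTime (f c : ℝ → ℝ) : ℝ≥0∞ :=
  sInf (ENNReal.ofReal '' {t : ℝ | 0 ≤ t ∧ f t = c t})

theorem boundaryHittingTime_le_of_le {f c c' : ℝ → ℝ} (hf : ContinuousOn f (Ici 0))
    (hc : ContinuousOn c (Ici 0)) (h0 : c 0 ≤ f 0) (hc' : ∀ t, 0 ≤ t → c' t ≤ c t) :
    boundaryHittingTime f c ≤ boundaryHittingTime f c' := by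
  refine le_sInf ?_
  rintro _ ⟨s, ⟨hs, hfs⟩, rfl⟩
  have hcont : ContinuousOn (fun t => f t - c t) (Icc 0 s) :=
    (hf.sub hc).mono Icc_subset_Ici_self
  have hzero : (0 : ℝ) ∈ Icc (f s - c s) (f 0 - c 0) :=
    ⟨by linarith [hc' s hs], by linarith⟩
  obtain ⟨u, ⟨hu0, hus⟩, hfu⟩ := intermediate_value_Icc' hs hcont hzero
  calc boundaryHittingTime f c ≤ ENNReal.ofReal u := sInf_le ⟨u, ⟨hu0, sub_eq_zero.1 hfu⟩, rfl⟩
    _ ≤ ENNReal.ofReal s := ENNReal.ofReal_le_ofReal hus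

/-- The boundary `c₂(t; b)` of the linear-volatility Arps model. -/
noncomputable def arpsBoundary (q₀ d₀ σ x b t : ℝ) : ℝ :=
  σ * t / 2 + (1 / σ) * Real.log (x / q₀) + (1 / (b * σ)) * Real.log (1 + b * d₀ * t)

section arpsBoundary

variable {q₀ d₀ σ x : ℝ}

theorem arpsBoundary_zero (b : ℝ) : arpsBoundary q₀ d₀ σ x b 0 = (1 / σ) * Real.log (x / q₀) := by
  simp [arpsBoundary]

theorem arpsBoundary_zero_nonpos (hσ : 0 < σ) (hx : 0 < x) (hxq : x < q₀) (b : ℝ) :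
    arpsBoundary q₀ d₀ σ x b 0 ≤ 0 := by
  rw [arpsBoundary_zero]
  have hq₀ : 0 < q₀ := hx.trans hxq
  exact mul_nonpos_of_nonneg_of_nonpos (by positivity)
    (Real.log_nonpos (by positivity) ((div_le_one hq₀).2 hxq.le))

theorem continuousOn_arpsBoundary (hd₀ : 0 ≤ d₀) {b : ℝ} (hb : 0 < b) :
    ContinuousOn (arpsBoundary q₀ d₀ σ x b) (Ici 0) := by
  refine ContinuousOn.add (by fun_prop) (continuousOn_const.mul (ContinuousOn.log (by fun_prop) ?_))
  intro t ht
  have : 0 ≤ b * d₀ * t := by have := mem_Ici.1 ht; positivity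
  positivity

theorem arpsBoundary_anti (hd₀ : 0 ≤ d₀) (hσ : 0 < σ) {b₁ b₂ : ℝ} (hb₁ : 0 < b₁) (h12 : b₁ ≤ b₂)
    {t : ℝ} (ht : 0 ≤ t) : arpsBoundary q₀ d₀ σ x b₂ t ≤ arpsBoundary q₀ d₀ σ x b₁ t := by
  have key := Real.log_one_add_mul_div_le hb₁ h12 (mul_nonneg hd₀ ht)
  have : ∀ b, 1 / (b * σ) * Real.log (1 + b * d₀ * t) = Real.log (1 + b * (d₀ * t)) / b / σ :=
    fun b => by rw [mul_assoc]; field_simp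
  simp only [arpsBoundary, this]
  gcongr

end arpsBoundary

theorem arps_hitting_time_stochastic_comparison_linear_vol_general
    {Ω : Type*} [MeasurableSpace Ω] (μ : Measure Ω)
    (q₀ d₀ σ x : ℝ) (hd₀ : 0 < d₀) (hσ : 0 < σ) (hx : 0 < x) (hxq : x < q₀)
    (B : Ω → ℝ → ℝ)
    (hBcont : ∀ᵐ ω ∂μ, ContinuousOn (B ω) (Set.Ici 0))
    (hB0 : ∀ᵐ ω ∂μ, B ω 0 = 0)
    (c₂ : ℝ → ℝ → ℝ)
    (hc₂ : ∀ b t : ℝ, c₂ b t = σ * t / 2 + (1 / σ) * Real.log (x / q₀) +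
      (1 / (b * σ)) * Real.log (1 + b * d₀ * t))
    (T : ℝ → Ω → ℝ≥0∞)
    (hT : ∀ b : ℝ, ∀ ω, T b ω = sInf (ENNReal.ofReal '' {t : ℝ | 0 ≤ t ∧ B ω t = c₂ b t})) :
    ∀ b₁ b₂ : ℝ, 0 < b₁ → b₁ ≤ b₂ →
      ∀ t : ℝ≥0∞, μ {ω | T b₁ ω > t} ≤ μ {ω | T b₂ ω > t} := by
  intro b₁ b₂ hb₁ h12 t
  obtain rfl : c₂ = arpsBoundary q₀ d₀ σ x := funext₂ hc₂
  have hT_le : ∀ᵐ ω ∂μ, T b₁ ω ≤ T b₂ ω := by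
    filter_upwards [hBcont, hB0] with ω hcont h0
    rw [hT, hT]
    exact boundaryHittingTime_le_of_le hcont (continuousOn_arpsBoundary hd₀.le hb₁)
      (h0.symm ▸ arpsBoundary_zero_nonpos hσ hx hxq b₁)
      (fun s hs => arpsBoundary_anti hd₀.le hσ hb₁ h12 hs)
  exact measure_mono_ae (hT_le.mono fun ω hω ht => lt_of_lt_of_le ht hω)

/-- Stochastic comparison of hitting times for the linear-volatility Arps boundaries: if
`(B_t)` has a.s. continuous sample paths with `B_0 = 0` a.s. and, for `b > 0`,
`c₂(t; b) = σ t/2 + (1/σ) ln(x/q₀) + (1/(bσ)) ln(1 + b d₀ t)` and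
`T(b) = inf {t ≥ 0 : B_t = c₂(t; b)}` (in `[0,∞]`, `inf ∅ = ∞`), then `0 < b₁ ≤ b₂` implies
`T(b₁) ≼_st T(b₂)`. -/
theorem arps_hitting_time_stochastic_comparison_linear_vol
    {Ω : Type*} [MeasurableSpace Ω] (μ : Measure Ω) [IsProbabilityMeasure μ]
    (q₀ d₀ σ x : ℝ) (hq₀ : 0 < q₀) (hd₀ : 0 < d₀) (hσ : 0 < σ) (hx : 0 < x) (hxq : x < q₀)
    (B : Ω → ℝ → ℝ)
    (hBcont : ∀ᵐ ω ∂μ, ContinuousOn (B ω) (Set.Ici 0))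
    (hB0 : ∀ᵐ ω ∂μ, B ω 0 = 0)
    (c₂ : ℝ → ℝ → ℝ)
    (hc₂ : ∀ b t : ℝ, c₂ b t = σ * t / 2 + (1 / σ) * Real.log (x / q₀) +
      (1 / (b * σ)) * Real.log (1 + b * d₀ * t))
    (T : ℝ → Ω → ℝ≥0∞)
    (hT : ∀ b : ℝ, ∀ ω, T b ω = sInf (ENNReal.ofReal '' {t : ℝ | 0 ≤ t ∧ B ω t = c₂ b t})) :
    ∀ b₁ b₂ : ℝ, 0 < b₁ → b₁ ≤ b₂ →
      ∀ t : ℝ≥0∞, μ {ω | T b₁ ω > t} ≤ μ {ω | T b₂ ω > t} :=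
  arps_hitting_time_stochastic_comparison_linear_vol_general μ q₀ d₀ σ x hd₀ hσ hx hxq B hBcont hB0
    c₂ hc₂ T hT
end
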